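/- Let (H,α) be a monoidal Hom-Hopf algebra over a commutative ring k and let h▷g := α(h₁)(α⁻¹(g)S(h₂)) be the left adjoint Hom-action. Then ad_L turns (H,α) into a left H-module Hom-algebra: for all g,h,l ∈ H, h▷(gl) = (h₁▷g)(h₂▷l) and h▷1 = ε(h)1. -/
import Mathlib


open TensorProduct

noncomputable def tmul2 {k A B C D E F : Type*} [CommRing k]
    [AddCommGroup A] [AddCommGroup B] [AddCommGroup C] [AddCommGroup D]
    [AddCommGroup E] [AddCommGroup F]
    [Module k A] [Module k B] [Module k C] [Module k D] [Module k E] [Module k F]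
    (f : A →ₗ[k] C →ₗ[k] E) (g : B →ₗ[k] D →ₗ[k] F) :
    (A ⊗[k] B) →ₗ[k] (C ⊗[k] D) →ₗ[k] (E ⊗[k] F) :=
  TensorProduct.curry
    ((TensorProduct.map (TensorProduct.lift f) (TensorProduct.lift g)) ∘ₗ
      (TensorProduct.tensorTensorTensorComm k A B C D).toLinearMap)

/-- A monoidal Hom-Hopf algebra over a commutative ring `k`. -/
structure MonHomHopf (k H : Type*) [CommRing k] [AddCommGroup H] [Module k H] where
  α : H ≃ₗ[k] H
  mul : H →ₗ[k] H →ₗ[k] H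
  one : H
  comul : H →ₗ[k] H ⊗[k] H
  counit : H →ₗ[k] k
  S : H →ₗ[k] H
  alpha_mul : ∀ g h, α (mul g h) = mul (α g) (α h)
  alpha_one : α one = one
  hom_assoc : ∀ g h l, mul (α g) (mul h l) = mul (mul g h) (α l)
  mul_one' : ∀ h, mul h one = α h
  one_mul' : ∀ h, mul one h = α h
  comul_alpha : ∀ h, comul (α h)
    = TensorProduct.map α.toLinearMap α.toLinearMap (comul h)
  counit_alpha : ∀ h, counit (α h) = counit h
  hom_coassoc : ∀ h,
    (TensorProduct.assoc k H H H) ((TensorProduct.map comul α.symm.toLinearMap) (comul h))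
      = (TensorProduct.map α.symm.toLinearMap comul) (comul h)
  counit_comul_left : ∀ h,
    (TensorProduct.lid k H) ((TensorProduct.map counit LinearMap.id) (comul h)) = α.symm h
  counit_comul_right : ∀ h,
    (TensorProduct.rid k H) ((TensorProduct.map LinearMap.id counit) (comul h)) = α.symm h
  comul_mul : ∀ g h, comul (mul g h) = tmul2 mul mul (comul g) (comul h)
  comul_one : comul one = one ⊗ₜ[k] one
  counit_mul : ∀ g h, counit (mul g h) = counit g * counit h
  counit_one : counit one = 1
  antipode_left : ∀ h,
    (TensorProduct.lift mul) ((TensorProduct.map S LinearMap.id) (comul h)) = counit h • one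
  antipode_right : ∀ h,
    (TensorProduct.lift mul) ((TensorProduct.map LinearMap.id S) (comul h)) = counit h • one
  S_alpha : ∀ h, S (α h) = α (S h)

/-- The left adjoint Hom-action `h ▷ g = α(h₁) (α⁻¹(g) S(h₂))`, as a linear map in `h`;
`adLL g h` is `h ▷ g`. -/
noncomputable def MonHomHopf.adLL {k H : Type*} [CommRing k] [AddCommGroup H] [Module k H]
    (A : MonHomHopf k H) (g : H) : H →ₗ[k] H :=
  (TensorProduct.lift
    ((A.mul.comp A.α.toLinearMap).compl₂ ((A.mul (A.α.symm g)).comp A.S))) ∘ₗ A.comul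

namespace MonHomHopf
variable {k H : Type*} [CommRing k] [AddCommGroup H] [Module k H] (A : MonHomHopf k H)

lemma ai_one : A.α.symm A.one = A.one := by
  conv_lhs => rw [← A.alpha_one]
  exact A.α.symm_apply_apply _

lemma ai_mul (g h : H) :
    A.α.symm (A.mul g h) = A.mul (A.α.symm g) (A.α.symm h) := by
  apply A.α.injective
  rw [A.α.apply_symm_apply, A.alpha_mul, A.α.apply_symm_apply, A.α.apply_symm_apply]

lemma S_ai (h : H) : A.S (A.α.symm h) = A.α.symm (A.S h) := by
  apply A.α.injective
  rw [← A.S_alpha, A.α.apply_symm_apply, A.α.apply_symm_apply]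

lemma part2 (h : H) : A.adLL A.one h = A.counit h • A.one := by
  have hmap : TensorProduct.lift
      ((A.mul.comp A.α.toLinearMap).compl₂ ((A.mul (A.α.symm A.one)).comp A.S))
      = A.α.toLinearMap ∘ₗ TensorProduct.lift A.mul ∘ₗ
        TensorProduct.map LinearMap.id A.S := by
    apply TensorProduct.ext'
    intro x z
    simp only [TensorProduct.lift.tmul, LinearMap.compl₂_apply, LinearMap.comp_apply,
      TensorProduct.map_tmul, LinearEquiv.coe_coe, LinearMap.id_coe, id_eq,
      A.ai_one, A.one_mul', A.alpha_mul]
  show (TensorProduct.lift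
      ((A.mul.comp A.α.toLinearMap).compl₂ ((A.mul (A.α.symm A.one)).comp A.S)))
      (A.comul h) = _
  rw [hmap]
  simp only [LinearMap.comp_apply, LinearEquiv.coe_coe]
  rw [A.antipode_right h, map_smul, A.alpha_one]

end MonHomHopf

namespace MonHomHopf
variable {k H : Type*} [CommRing k] [AddCommGroup H] [Module k H]

/-- `Fm ((u ⊗ v) ⊗ z) = μ (μ (α u) (μ g' (S v))) (adLL l z)` -/
private noncomputable def Fm (A : MonHomHopf k H) (g l : H) :
    (H ⊗[k] H) ⊗[k] H →ₗ[k] H :=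
  TensorProduct.lift
    ((A.mul ∘ₗ TensorProduct.lift
        ((A.mul ∘ₗ A.α.toLinearMap).compl₂ ((A.mul (A.α.symm g)) ∘ₗ A.S))).compl₂
      (A.adLL l))

private noncomputable def Gm (A : MonHomHopf k H) (g l : H) :
    H ⊗[k] (H ⊗[k] H) →ₗ[k] H :=
  Fm A g l ∘ₗ TensorProduct.map LinearMap.id A.α.toLinearMap ∘ₗ
    (TensorProduct.assoc k H H H).symm.toLinearMap

/-- `d2 w₁ w₂ = μ (α² w₁) (μ l' (α (S w₂)))` -/
private noncomputable def d2 (A : MonHomHopf k H) (l : H) : H →ₗ[k] H →ₗ[k] H :=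
  (A.mul ∘ₗ A.α.toLinearMap ∘ₗ A.α.toLinearMap).compl₂
    ((A.mul (A.α.symm l)) ∘ₗ A.α.toLinearMap ∘ₗ A.S)

/-- `T0 y w = μ (μ x (μ g' (S y))) (adLL l (α w))` -/
private noncomputable def T0 (A : MonHomHopf k H) (g l x : H) : H →ₗ[k] H →ₗ[k] H :=
  (A.mul ∘ₗ (A.mul x) ∘ₗ (A.mul (A.α.symm g)) ∘ₗ A.S).compl₂
    (A.adLL l ∘ₗ A.α.toLinearMap)

/-- `L1 (y ⊗ (w₁ ⊗ w₂)) = μ (μ x (μ g' (S y))) (d2 w₁ w₂)` -/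
private noncomputable def L1 (A : MonHomHopf k H) (g l x : H) :
    H ⊗[k] (H ⊗[k] H) →ₗ[k] H :=
  TensorProduct.lift
    (((LinearMap.llcomp k (H ⊗[k] H) H H).flip (TensorProduct.lift (d2 A l))) ∘ₗ
      A.mul ∘ₗ (A.mul x) ∘ₗ (A.mul (A.α.symm g)) ∘ₗ A.S)

private noncomputable def L2 (A : MonHomHopf k H) (g l x : H) :
    (H ⊗[k] H) ⊗[k] H →ₗ[k] H :=
  L1 A g l x ∘ₗ TensorProduct.map A.α.toLinearMap LinearMap.id ∘ₗ
    (TensorProduct.assoc k H H H).toLinearMap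

/-- `Ebil p w = μ (μ x g) (μ (α p) (μ l' (α (S w))))` -/
private noncomputable def Ebil (A : MonHomHopf k H) (g l x : H) : H →ₗ[k] H →ₗ[k] H :=
  ((LinearMap.llcomp k H H H (A.mul (A.mul x g))) ∘ₗ A.mul ∘ₗ A.α.toLinearMap).compl₂
    ((A.mul (A.α.symm l)) ∘ₗ A.α.toLinearMap ∘ₗ A.S)

private noncomputable def L3 (A : MonHomHopf k H) (g l x : H) :
    (H ⊗[k] H) ⊗[k] H →ₗ[k] H :=
  TensorProduct.lift ((Ebil A g l x) ∘ₗ TensorProduct.lift (A.mul ∘ₗ A.S))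

/-- `Bm x z = μ (μ x g) (μ l (S z))` -/
private noncomputable def Bm (A : MonHomHopf k H) (g l : H) : H →ₗ[k] H →ₗ[k] H :=
  (A.mul ∘ₗ (A.mul.flip g)).compl₂ ((A.mul l) ∘ₗ A.S)

variable (A : MonHomHopf k H)

private lemma step1 (g l : H) :
    TensorProduct.lift ((A.mul.comp (A.adLL g)).compl₂ (A.adLL l))
      = Fm A g l ∘ₗ TensorProduct.map A.comul LinearMap.id := by
  apply TensorProduct.ext'
  intro x z
  simp [Fm, MonHomHopf.adLL]

private lemma lemM0 (g l x : H) :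
    Gm A g l ∘ₗ (TensorProduct.mk k H (H ⊗[k] H) (A.α.symm x))
      = TensorProduct.lift (T0 A g l x) := by
  apply TensorProduct.ext'
  intro y w
  simp [Gm, Fm, T0, TensorProduct.assoc_symm_tmul, A.α.apply_symm_apply]

private lemma adLL_alpha (l w : H) :
    A.adLL l (A.α w) = TensorProduct.lift (d2 A l) (A.comul w) := by
  have hmap : TensorProduct.lift
      ((A.mul.comp A.α.toLinearMap).compl₂ ((A.mul (A.α.symm l)).comp A.S)) ∘ₗ
        TensorProduct.map A.α.toLinearMap A.α.toLinearMap
      = TensorProduct.lift (d2 A l) := by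
    apply TensorProduct.ext'
    intro u v
    simp [d2, A.S_alpha]
  show TensorProduct.lift
      ((A.mul.comp A.α.toLinearMap).compl₂ ((A.mul (A.α.symm l)).comp A.S))
      (A.comul (A.α w)) = _
  rw [A.comul_alpha, ← hmap]
  rfl

private lemma lemM1 (g l x : H) :
    TensorProduct.lift (T0 A g l x)
      = L1 A g l x ∘ₗ TensorProduct.map LinearMap.id A.comul := by
  apply TensorProduct.ext'
  intro y w
  simp [T0, L1, A.adLL_alpha]

end MonHomHopf

namespace MonHomHopf
variable {k H : Type*} [CommRing k] [AddCommGroup H] [Module k H] (A : MonHomHopf k H)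

private lemma lemKEY (g l x : H) : L2 A g l x = L3 A g l x := by
  apply TensorProduct.ext_threefold
  intro u v w
  simp only [L2, L1, L3, d2, Ebil, LinearMap.comp_apply, LinearEquiv.coe_coe,
    TensorProduct.assoc_tmul, TensorProduct.map_tmul, LinearMap.id_coe, id_eq,
    TensorProduct.lift.tmul, LinearMap.compl₂_apply, LinearMap.flip_apply,
    LinearMap.llcomp_apply]
  rw [A.S_alpha]
  have h1 : (A.mul x) ((A.mul (A.α.symm g)) (A.α (A.S u)))
      = (A.mul ((A.mul (A.α.symm x)) (A.α.symm g))) (A.α (A.α (A.S u))) := by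
    conv_lhs => rw [← A.α.apply_symm_apply x]
    exact A.hom_assoc _ _ _
  have h2 : (A.mul (A.α (A.α v))) ((A.mul (A.α.symm l)) (A.α (A.S w)))
      = A.α ((A.mul (A.α v)) ((A.mul (A.α.symm (A.α.symm l))) (A.S w))) := by
    rw [A.alpha_mul, A.alpha_mul, A.α.apply_symm_apply]
  rw [h1, h2, ← A.hom_assoc, A.hom_assoc (A.α (A.S u)) (A.α v),
    ← A.alpha_mul (A.S u) v, A.alpha_mul (A.α.symm (A.α.symm l)) (A.S w),
    A.α.apply_symm_apply, A.alpha_mul (A.α.symm x) (A.α.symm g),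
    A.α.apply_symm_apply, A.α.apply_symm_apply]

end MonHomHopf

namespace MonHomHopf
variable {k H : Type*} [CommRing k] [AddCommGroup H] [Module k H] (A : MonHomHopf k H)

private lemma sMul_eq :
    TensorProduct.lift (A.mul ∘ₗ A.S)
      = TensorProduct.lift A.mul ∘ₗ TensorProduct.map A.S LinearMap.id := by
  apply TensorProduct.ext'
  intro u v
  simp

private lemma lemM4 (g l x : H) :
    L3 A g l x ∘ₗ TensorProduct.map A.comul A.α.symm.toLinearMap
      = ((Ebil A g l x A.one) ∘ₗ A.α.symm.toLinearMap) ∘ₗ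
          (TensorProduct.lid k H).toLinearMap ∘ₗ
          TensorProduct.map A.counit LinearMap.id := by
  apply TensorProduct.ext'
  intro y w
  simp only [L3, LinearMap.comp_apply, TensorProduct.map_tmul, LinearEquiv.coe_coe,
    TensorProduct.lift.tmul, LinearMap.id_coe, id_eq, TensorProduct.lid_tmul]
  rw [LinearMap.congr_fun (A.sMul_eq) (A.comul y)]
  simp only [LinearMap.comp_apply]
  rw [A.antipode_left y]
  simp [map_smul]

private lemma lem_final (g l x z : H) :
    Ebil A g l x A.one (A.α.symm (A.α.symm z)) = Bm A g l x z := by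
  simp only [Ebil, Bm, LinearMap.compl₂_apply, LinearMap.comp_apply,
    LinearEquiv.coe_coe, LinearMap.llcomp_apply, LinearMap.flip_apply]
  rw [A.alpha_one, A.S_ai, A.S_ai, A.α.apply_symm_apply, A.one_mul', A.alpha_mul,
    A.α.apply_symm_apply, A.α.apply_symm_apply]

private lemma step4 (g l : H) :
    Gm A g l ∘ₗ TensorProduct.map A.α.symm.toLinearMap A.comul
      = TensorProduct.lift (Bm A g l) := by
  apply TensorProduct.ext'
  intro x z
  simp only [LinearMap.comp_apply, TensorProduct.map_tmul, LinearEquiv.coe_coe,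
    TensorProduct.lift.tmul]
  have h0 : Gm A g l (A.α.symm x ⊗ₜ[k] A.comul z)
      = TensorProduct.lift (T0 A g l x) (A.comul z) :=
    LinearMap.congr_fun (A.lemM0 g l x) (A.comul z)
  rw [h0, LinearMap.congr_fun (A.lemM1 g l x) (A.comul z)]
  simp only [LinearMap.comp_apply]
  have hsplit : (TensorProduct.map (LinearMap.id : H →ₗ[k] H) A.comul)
      = TensorProduct.map A.α.toLinearMap LinearMap.id ∘ₗ
          TensorProduct.map A.α.symm.toLinearMap A.comul := by
    rw [← TensorProduct.map_comp]
    congr 1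
    all_goals (apply LinearMap.ext; intro y; simp)
  rw [hsplit]
  simp only [LinearMap.comp_apply]
  rw [← A.hom_coassoc z]
  have : L1 A g l x ((TensorProduct.map A.α.toLinearMap LinearMap.id)
        ((TensorProduct.assoc k H H H)
          ((TensorProduct.map A.comul A.α.symm.toLinearMap) (A.comul z))))
      = L2 A g l x ((TensorProduct.map A.comul A.α.symm.toLinearMap) (A.comul z)) := by
    simp [L2]
  rw [this, A.lemKEY g l x]
  have h4 := LinearMap.congr_fun (A.lemM4 g l x) (A.comul z)
  simp only [LinearMap.comp_apply, LinearEquiv.coe_coe] at h4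
  rw [h4]
  rw [A.counit_comul_left z, A.lem_final g l x z]

private lemma step5 (g l : H) :
    TensorProduct.lift ((A.mul.comp A.α.toLinearMap).compl₂
        ((A.mul (A.α.symm (A.mul g l))).comp A.S))
      = TensorProduct.lift (Bm A g l) := by
  apply TensorProduct.ext'
  intro x z
  simp only [Bm, TensorProduct.lift.tmul, LinearMap.compl₂_apply, LinearMap.comp_apply,
    LinearEquiv.coe_coe, LinearMap.flip_apply]
  rw [A.ai_mul]
  -- LHS: μ (α x) (μ (μ g' l') (S z)) = μ (μ x (μ g' l')) (α (S z))
  have hL : (A.mul (A.α x)) ((A.mul ((A.mul (A.α.symm g)) (A.α.symm l))) (A.S z))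
      = (A.mul ((A.mul x) ((A.mul (A.α.symm g)) (A.α.symm l)))) (A.α (A.S z)) := by
    conv_lhs => rw [← A.α.apply_symm_apply x]
    rw [A.hom_assoc, A.α.apply_symm_apply]
  rw [hL]
  -- RHS: μ (μ x g) (μ l (S z)) = μ (μ x (μ g' l')) (α (S z))
  have hR : (A.mul ((A.mul x) g)) ((A.mul l) (A.S z))
      = (A.mul ((A.mul x) ((A.mul (A.α.symm g)) (A.α.symm l)))) (A.α (A.S z)) := by
    conv_lhs =>
      rw [← A.α.apply_symm_apply g, ← A.α.apply_symm_apply x,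
        ← A.alpha_mul (A.α.symm x) (A.α.symm g), ← A.α.apply_symm_apply l]
    rw [A.hom_assoc, ← A.hom_assoc (A.α.symm x) (A.α.symm g) (A.α.symm l),
      A.α.apply_symm_apply]
  rw [hR]

lemma part1 (g h l : H) : A.adLL (A.mul g l) h
    = TensorProduct.lift ((A.mul.comp (A.adLL g)).compl₂ (A.adLL l)) (A.comul h) := by
  rw [LinearMap.congr_fun (A.step1 g l) (A.comul h)]
  simp only [LinearMap.comp_apply]
  have hsplit : (TensorProduct.map A.comul (LinearMap.id : H →ₗ[k] H))
      = TensorProduct.map LinearMap.id A.α.toLinearMap ∘ₗ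
          TensorProduct.map A.comul A.α.symm.toLinearMap := by
    rw [← TensorProduct.map_comp]
    congr 1
    all_goals (apply LinearMap.ext; intro y; simp)
  rw [hsplit]
  simp only [LinearMap.comp_apply]
  have hco : (TensorProduct.map A.comul A.α.symm.toLinearMap) (A.comul h)
      = (TensorProduct.assoc k H H H).symm
          ((TensorProduct.map A.α.symm.toLinearMap A.comul) (A.comul h)) := by
    rw [← A.hom_coassoc h, LinearEquiv.symm_apply_apply]
  rw [hco]
  have : Fm A g l ((TensorProduct.map LinearMap.id A.α.toLinearMap)
        ((TensorProduct.assoc k H H H).symm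
          ((TensorProduct.map A.α.symm.toLinearMap A.comul) (A.comul h))))
      = (Gm A g l ∘ₗ TensorProduct.map A.α.symm.toLinearMap A.comul) (A.comul h) := by
    simp [Gm]
  rw [this, A.step4 g l]
  show _ = TensorProduct.lift (Bm A g l) (A.comul h)
  rw [← A.step5 g l]
  rfl

end MonHomHopf

/-- the left adjoint Hom-action makes `(H,α)` a left `H`-module Hom-algebra:
`h ▷ (g l) = (h₁ ▷ g)(h₂ ▷ l)` and `h ▷ 1 = ε(h) 1`. -/
theorem left_adjoint_action_module_algebra {k H : Type*} [CommRing k] [AddCommGroup H]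
    [Module k H] (A : MonHomHopf k H) :
    (∀ g h l, A.adLL (A.mul g l) h
      = TensorProduct.lift ((A.mul.comp (A.adLL g)).compl₂ (A.adLL l)) (A.comul h)) ∧
    (∀ h, A.adLL A.one h = A.counit h • A.one) := by
  exact ⟨fun g h l => A.part1 g h l, A.part2⟩
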